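/- Let A be a C*-algebra, (X, Σ) a measurable space, and m a state-valued vector measure on (X, Σ): m maps measurable sets to continuous linear functionals on A, m(∅) = 0, m is countably additive in the dual norm, and for every measurable S and every a ∈ A with 0 ≤ a the value (m S)(a) is a nonnegative real number. For each a ∈ A with 0 ≤ a, let μ_a be the finite measure μ_a(S) = (m S)(a), and let m̂ be the norm measure m̂(S) = ‖m(S)‖. Let f : X → [0, ∞) be measurable with ∫_X f dμ_a < ∞ for every a ≥ 0. Then for every measurable S there exists a unique continuous linear functional I_S on A such that I_S(a) = ∫_S f dμ_a for every a ∈ A with 0 ≤ a; I_S is a positive functional and ‖I_S‖ ≤ ∫_S f dm̂. -/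

import Mathlib

/-!
Approximate `1_S f` from below by the simple functions `eapprox` and integrate each of them
against `m` by a finite sum. The differences along this sequence of functionals are positive,
and a positive functional on a unital C⋆-normed algebra has norm `ω 1`, so the norm of a
difference is the difference of the values at `1`. These converge by monotone convergence; hence
the sequence is Cauchy in the (complete) dual and its limit takes the right values on positive
elements. Uniqueness holds because positive elements span `A` (polarization), and
`‖I‖ = I 1 = ∫_S f dμ₁ = ∫_S f dm̂` because `m̂ = μ₁`.
-/

open MeasureTheory Filter Topology
open scoped ComplexConjugate ENNReal Function

theorem le_of_sq_le_mul_succ {x : ℕ → ℝ} {P M : ℝ} (hP : 0 ≤ P)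
    (hx : ∀ k, x k ^ 2 ≤ P * x (k + 1)) (hM : ∀ k, x k ≤ M) : x 0 ≤ P := by
  by_contra! hlt
  obtain rfl | hP := hP.eq_or_lt
  · nlinarith [hx 0]
  have hgrowth : ∀ k, P * (x 0 / P) ^ 2 ^ k ≤ x k := by
    intro k
    induction k with
    | zero => simp [mul_div_cancel₀ _ hP.ne']
    | succ k ih =>
      have h0 : 0 ≤ P * (x 0 / P) ^ 2 ^ k := by have : 0 < x 0 := hP.trans hlt; positivity
      refine le_of_mul_le_mul_left ?_ hP
      calc P * (P * (x 0 / P) ^ 2 ^ (k + 1)) = (P * (x 0 / P) ^ 2 ^ k) ^ 2 := by ring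
        _ ≤ x k ^ 2 := pow_le_pow_left₀ h0 ih 2
        _ ≤ P * x (k + 1) := hx k
  have htend : Tendsto (fun k => P * (x 0 / P) ^ 2 ^ k) atTop atTop :=
    ((tendsto_pow_atTop_atTop_of_one_lt ((one_lt_div hP).2 hlt)).comp
      (tendsto_pow_atTop_atTop_of_one_lt one_lt_two)).const_mul_atTop hP
  obtain ⟨k, hk⟩ := (htend.eventually_gt_atTop M).exists
  linarith [hgrowth k, hM k]

section StarAlgebra

variable {A : Type*} [Ring A] [StarRing A] [Algebra ℂ A] [StarModule ℂ A]

theorem star_one_add_smul_mul_one_add_smul (t : ℂ) (a : A) :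
    star (1 + t • a) * (1 + t • a) =
      1 + t • a + star t • star a + (star t * t) • (star a * a) := by
  simp only [star_add, star_one, star_smul, add_mul, mul_add, one_mul, mul_one,
    smul_mul_assoc, mul_smul_comm, smul_smul, smul_add]
  module

variable [PartialOrder A] [StarOrderedRing A]

theorem span_setOf_nonneg_eq_top : Submodule.span ℂ {a : A | 0 ≤ a} = ⊤ := by
  refine Submodule.eq_top_iff'.2 fun a => ?_
  set q : ℂ → A := fun t => star (1 + t • a) * (1 + t • a)
  have hq : ∀ t, q t ∈ Submodule.span ℂ {a : A | 0 ≤ a} :=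
    fun t => Submodule.subset_span (star_mul_self_nonneg _)
  have polarization :
      (4 : ℂ) • a = q 1 - q (-1) + Complex.I • (q (-Complex.I) - q Complex.I) := by
    simp only [q, star_one_add_smul_mul_one_add_smul, Complex.star_def, map_one, map_neg,
      Complex.conj_I]
    match_scalars <;> ring_nf <;> simp only [Complex.I_sq] <;> ring
  have h4 : (4 : ℂ) • a ∈ Submodule.span ℂ {a : A | 0 ≤ a} := by
    rw [polarization]
    exact add_mem (sub_mem (hq _) (hq _)) (Submodule.smul_mem _ _ (sub_mem (hq _) (hq _)))
  simpa using Submodule.smul_mem _ (4⁻¹ : ℂ) h4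

end StarAlgebra

section PositiveFunctional

variable {A F : Type*} [Zero A] [LE A] [FunLike F A ℂ]

def IsPositiveFunctional (ω : F) : Prop :=
  ∀ a : A, 0 ≤ a → ∃ r : ℝ, 0 ≤ r ∧ ω a = r

namespace IsPositiveFunctional

variable {ω : F}

theorem re_apply_nonneg (hω : IsPositiveFunctional ω) {a : A} (ha : 0 ≤ a) :
    0 ≤ (ω a).re := by
  obtain ⟨r, hr, h⟩ := hω a ha
  simpa [h] using hr

theorem ofReal_re_apply (hω : IsPositiveFunctional ω) {a : A} (ha : 0 ≤ a) :
    ((ω a).re : ℂ) = ω a := by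
  obtain ⟨r, -, h⟩ := hω a ha
  simp [h]

end IsPositiveFunctional

end PositiveFunctional

namespace IsPositiveFunctional

variable {A F : Type*} [Ring A] [StarRing A] [Algebra ℂ A] [StarModule ℂ A] [PartialOrder A]
  [StarOrderedRing A] [FunLike F A ℂ] [LinearMapClass F ℂ A ℂ] {ω : F}

theorem map_star (hω : IsPositiveFunctional ω) (a : A) : ω (star a) = conj (ω a) := by
  have ha : a ∈ Submodule.span ℂ {a : A | 0 ≤ a} := by
    rw [span_setOf_nonneg_eq_top]; trivial
  induction ha using Submodule.span_induction with
  | mem b hb =>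
    rw [(IsSelfAdjoint.of_nonneg hb).star_eq, ← hω.ofReal_re_apply hb, Complex.conj_ofReal]
  | zero => simp
  | add b c _ _ hb hc => simp [hb, hc]
  | smul t b _ hb => simp [hb]

abbrev preInnerProductCore (hω : IsPositiveFunctional ω) : PreInnerProductSpace.Core ℂ A where
  inner a b := ω (star a * b)
  conj_inner_symm a b := by rw [← hω.map_star, star_mul, star_star]
  re_inner_nonneg a := hω.re_apply_nonneg (star_mul_self_nonneg a)
  add_left a b c := by rw [star_add, add_mul, map_add]
  smul_left a b t := by rw [star_smul, smul_mul_assoc, map_smul, smul_eq_mul]; rfl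

theorem norm_apply_sq_le (hω : IsPositiveFunctional ω) (b : A) :
    ‖ω b‖ ^ 2 ≤ (ω 1).re * (ω (star b * b)).re := by
  have := InnerProductSpace.Core.inner_mul_inner_self_le (c := hω.preInnerProductCore) 1 b
  change ‖ω (star 1 * b)‖ * ‖ω (star b * 1)‖ ≤
    (ω (star 1 * 1)).re * (ω (star b * b)).re at this
  rwa [star_one, one_mul, one_mul, mul_one, hω.map_star, Complex.norm_conj, ← sq] at this

end IsPositiveFunctional

namespace MeasureTheory.SimpleFunc

variable {X : Type*} [MeasurableSpace X]

noncomputable def integralAgainst {V : Type*} [AddCommMonoid V] [Module ℝ V]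
    (φ : SimpleFunc X ℝ≥0∞) (m : Set X → V) : V :=
  ∑ c ∈ φ.range, c.toReal • m (φ ⁻¹' {c})

theorem integralAgainst_apply {E : Type*} [AddCommGroup E] [Module ℂ E] [TopologicalSpace E]
    {m : Set X → StrongDual ℂ E} {μ : Measure X} {a : E}
    (hm : ∀ s, MeasurableSet s → m s a = (μ s).toReal) (φ : SimpleFunc X ℝ≥0∞)
    (hφ : φ.lintegral μ ≠ ∞) : φ.integralAgainst m a = (φ.lintegral μ).toReal := by
  rw [integralAgainst, SimpleFunc.lintegral,
    ENNReal.toReal_sum fun c hc => (ENNReal.lt_top_of_sum_ne_top hφ hc).ne]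
  simp [hm _ (φ.measurableSet_fiber _), ENNReal.toReal_mul]

end MeasureTheory.SimpleFunc

section CStarRing

variable {A : Type*} [NormedRing A] [StarRing A] [CStarRing A] [NormedAlgebra ℂ A]
  [StarModule ℂ A] [PartialOrder A] [StarOrderedRing A]

namespace IsPositiveFunctional

variable {ω : StrongDual ℂ A}

-- `A` need not be complete, so `‖b‖ ^ 2 • 1 - star b * b` need not be positive; instead
-- Cauchy–Schwarz is iterated along the powers `d ^ 2 ^ k` of `d = star b * b`.
theorem re_apply_star_mul_self_le (hω : IsPositiveFunctional ω) {b : A} (hb : ‖b‖ ≤ 1) :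
    (ω (star b * b)).re ≤ (ω 1).re := by
  set d := star b * b
  have hd : IsSelfAdjoint d := .star_mul_self b
  have hdn : ‖d‖ ≤ 1 := by
    rw [CStarRing.norm_star_mul_self]
    exact mul_le_one₀ hb (norm_nonneg b) hb
  have hbound : ∀ k : ℕ, (ω (d ^ 2 ^ k)).re ≤ ‖ω‖ := fun k => calc
    (ω (d ^ 2 ^ k)).re ≤ ‖ω (d ^ 2 ^ k)‖ := Complex.re_le_norm _
    _ ≤ ‖ω‖ * ‖d ^ 2 ^ k‖ := ω.le_opNorm _
    _ ≤ ‖ω‖ * 1 := by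
      gcongr
      exact (norm_pow_le' d (by positivity)).trans (pow_le_one₀ (norm_nonneg d) hdn)
    _ = ‖ω‖ := mul_one _
  have hstep : ∀ k : ℕ, (ω (d ^ 2 ^ k)).re ^ 2 ≤ (ω 1).re * (ω (d ^ 2 ^ (k + 1))).re :=
    fun k => calc
    (ω (d ^ 2 ^ k)).re ^ 2 ≤ ‖ω (d ^ 2 ^ k)‖ ^ 2 := by
      rw [← sq_abs]
      exact pow_le_pow_left₀ (abs_nonneg _) (Complex.abs_re_le_norm _) 2
    _ ≤ (ω 1).re * (ω (star (d ^ 2 ^ k) * d ^ 2 ^ k)).re := hω.norm_apply_sq_le _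
    _ = (ω 1).re * (ω (d ^ 2 ^ (k + 1))).re := by
      rw [(hd.pow _).star_eq, ← pow_add, ← two_mul, ← pow_succ']
  simpa using le_of_sq_le_mul_succ (hω.re_apply_nonneg zero_le_one) hstep hbound

theorem norm_eq_re_apply_one (hω : IsPositiveFunctional ω) : ‖ω‖ = (ω 1).re := by
  have hP := hω.re_apply_nonneg (zero_le_one (α := A))
  refine le_antisymm (ω.opNorm_le_of_unit_norm hP fun b hb => ?_) ?_
  · have := (hω.norm_apply_sq_le b).trans
      (mul_le_mul_of_nonneg_left (hω.re_apply_star_mul_self_le hb.le) hP)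
    exact (pow_le_pow_iff_left₀ (norm_nonneg _) hP two_ne_zero).1 (by nlinarith)
  · have h1 : ‖(1 : A)‖ ≤ 1 := by
      have := CStarRing.norm_star_mul_self (x := (1 : A))
      rw [star_one, one_mul] at this
      nlinarith [norm_nonneg (1 : A)]
    calc (ω 1).re ≤ ‖ω 1‖ := Complex.re_le_norm _
      _ ≤ ‖ω‖ * ‖(1 : A)‖ := ω.le_opNorm 1
      _ ≤ ‖ω‖ := mul_le_of_le_one_right (norm_nonneg _) h1

end IsPositiveFunctional

theorem cauchySeq_of_isPositiveFunctional_sub {I : ℕ → StrongDual ℂ A}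
    (hI : ∀ k n, k ≤ n → IsPositiveFunctional (I n - I k))
    (h1 : CauchySeq fun n => (I n 1).re) : CauchySeq I := by
  have hdist : ∀ k n, dist (I k) (I n) ≤ dist (I k 1).re (I n 1).re := by
    intro k n
    wlog hkn : k ≤ n generalizing k n
    · rw [dist_comm, dist_comm (I k 1).re]
      exact this n k (le_of_not_ge hkn)
    rw [dist_comm, dist_eq_norm, (hI k n hkn).norm_eq_re_apply_one, Real.dist_eq, abs_sub_comm,
      sub_apply, Complex.sub_re]
    exact le_abs_self _
  exact cauchySeq_iff_tendsto_dist_atTop_0.2 <| squeeze_zero (fun _ => dist_nonneg)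
    (fun p => hdist p.1 p.2) (cauchySeq_iff_tendsto_dist_atTop_0.1 h1)

theorem exists_apply_eq_lintegral {X : Type*} [MeasurableSpace X]
    {m : Set X → StrongDual ℂ A}
    (hm : ∀ s, MeasurableSet s → IsPositiveFunctional (m s)) {μ : A → Measure X}
    (hμ : ∀ a : A, 0 ≤ a → ∀ s, MeasurableSet s → μ a s = ENNReal.ofReal (m s a).re)
    {g : X → ℝ≥0∞} (hg : Measurable g) (hfin : ∀ a : A, 0 ≤ a → ∫⁻ x, g x ∂μ a ≠ ∞) :
    ∃ I : StrongDual ℂ A, ∀ a : A, 0 ≤ a → I a = (∫⁻ x, g x ∂μ a).toReal := by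
  set I : ℕ → StrongDual ℂ A := fun n => (SimpleFunc.eapprox g n).integralAgainst m
  set L : A → ℕ → ℝ := fun a n => ((SimpleFunc.eapprox g n).lintegral (μ a)).toReal
  have hLfin : ∀ a : A, 0 ≤ a → ∀ n, (SimpleFunc.eapprox g n).lintegral (μ a) ≠ ∞ :=
    fun a ha n => ne_top_of_le_ne_top (hfin a ha) (lintegral_eapprox_le_lintegral hg n)
  have hLmono : ∀ a : A, 0 ≤ a → Monotone (L a) := fun a ha k n hkn =>
    ENNReal.toReal_mono (hLfin a ha n)
      (SimpleFunc.lintegral_mono (SimpleFunc.monotone_eapprox g hkn) le_rfl)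
  have hL : ∀ a : A, 0 ≤ a → Tendsto (L a) atTop (𝓝 (∫⁻ x, g x ∂μ a).toReal) := by
    intro a ha
    refine (ENNReal.tendsto_toReal (hfin a ha)).comp ?_
    rw [lintegral_eq_iSup_eapprox_lintegral hg]
    exact tendsto_atTop_iSup fun k n hkn =>
      SimpleFunc.lintegral_mono (SimpleFunc.monotone_eapprox g hkn) le_rfl
  have hI : ∀ a : A, 0 ≤ a → ∀ n, I n a = L a n := fun a ha n =>
    SimpleFunc.integralAgainst_apply (fun s hs => by
      rw [hμ a ha s hs, ENNReal.toReal_ofReal ((hm s hs).re_apply_nonneg ha),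
        (hm s hs).ofReal_re_apply ha])
      _ (hLfin a ha n)
  have hIsub : ∀ k n, k ≤ n → IsPositiveFunctional (I n - I k) := fun k n hkn a ha =>
    ⟨L a n - L a k, sub_nonneg.2 (hLmono a ha hkn), by simp [hI a ha]⟩
  have hI1 : (fun n => (I n 1).re) = L 1 := funext fun n => by simp [hI 1 zero_le_one n]
  obtain ⟨J, hlim⟩ := cauchySeq_tendsto_of_complete
    (cauchySeq_of_isPositiveFunctional_sub hIsub (hI1 ▸ (hL 1 zero_le_one).cauchySeq))
  refine ⟨J, fun a ha => tendsto_nhds_unique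
    (((ContinuousLinearMap.apply ℂ ℂ a).continuous.tendsto J).comp hlim) ?_⟩
  simpa [Function.comp_def, hI a ha] using (Complex.continuous_ofReal.tendsto _).comp (hL a ha)

end CStarRing

theorem stateValuedMeasure_integral_exists_general
    {A : Type*} [NormedRing A] [StarRing A] [CStarRing A]
    [NormedAlgebra ℂ A] [StarModule ℂ A] [PartialOrder A] [StarOrderedRing A]
    {X : Type*} [MeasurableSpace X]
    (m : Set X → StrongDual ℂ A)
    (hpos : ∀ S : Set X, MeasurableSet S → ∀ a : A, 0 ≤ a →
      ∃ r : ℝ, 0 ≤ r ∧ m S a = (r : ℂ))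
    (μa : A → Measure X)
    (hμa : ∀ a : A, 0 ≤ a → ∀ S : Set X, MeasurableSet S →
      μa a S = ENNReal.ofReal (m S a).re)
    (mhat : Measure X)
    (hmhat : ∀ S : Set X, MeasurableSet S → mhat S = ENNReal.ofReal ‖m S‖)
    (f : X → ℝ) (hfmeas : Measurable f) (hf0 : ∀ x, 0 ≤ f x)
    (hint : ∀ a : A, 0 ≤ a → ∫⁻ x, ENNReal.ofReal (f x) ∂(μa a) < ⊤) :
    ∀ S : Set X, MeasurableSet S →
      (∃! I : StrongDual ℂ A,
        ∀ a : A, 0 ≤ a → I a = ((∫ x in S, f x ∂(μa a) : ℝ) : ℂ)) ∧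
      ∀ I : StrongDual ℂ A,
        (∀ a : A, 0 ≤ a → I a = ((∫ x in S, f x ∂(μa a) : ℝ) : ℂ)) →
          (∀ a : A, 0 ≤ a → ∃ r : ℝ, 0 ≤ r ∧ I a = (r : ℂ)) ∧
            ‖I‖ ≤ ∫ x in S, f x ∂mhat := by
  intro S hS
  obtain ⟨I₀, hI₀⟩ := exists_apply_eq_lintegral hpos hμa (hfmeas.ennreal_ofReal.indicator hS)
    fun a ha => by
      rw [lintegral_indicator hS]
      exact ((setLIntegral_le_lintegral S _).trans_lt (hint a ha)).ne
  have hI₀S : ∀ a : A, 0 ≤ a → I₀ a = ((∫ x in S, f x ∂(μa a) : ℝ) : ℂ) := fun a ha => by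
    rw [hI₀ a ha, lintegral_indicator hS, integral_eq_lintegral_of_nonneg_ae
      (.of_forall hf0) hfmeas.aestronglyMeasurable]
  have hposI : ∀ I : StrongDual ℂ A,
      (∀ a : A, 0 ≤ a → I a = ((∫ x in S, f x ∂(μa a) : ℝ) : ℂ)) → IsPositiveFunctional I :=
    fun I hI a ha => ⟨_, integral_nonneg fun x => hf0 x, hI a ha⟩
  have hmhat_eq : mhat = μa 1 := Measure.ext fun s hs => by
    rw [hmhat s hs, hμa 1 zero_le_one s hs,
      IsPositiveFunctional.norm_eq_re_apply_one (hpos s hs)]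
  refine ⟨⟨I₀, hI₀S, fun I hI => ContinuousLinearMap.coe_injective <|
    LinearMap.ext_on span_setOf_nonneg_eq_top fun a ha => ?_⟩, fun I hI => ⟨hposI I hI, ?_⟩⟩
  · simp [hI a ha, hI₀S a ha]
  · rw [(hposI I hI).norm_eq_re_apply_one, hI 1 zero_le_one, Complex.ofReal_re, hmhat_eq]

/-- Integration of a nonnegative scalar function against a state-valued measure: for every
measurable `S` there is a unique continuous linear functional `I_S` with
`I_S(a) = ∫_S f dμ_a` on positive elements `a`; it is positive and `‖I_S‖ ≤ ∫_S f dm̂`. -/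
theorem stateValuedMeasure_integral_exists
    {A : Type*} [NormedRing A] [StarRing A] [CStarRing A]
    [NormedAlgebra ℂ A] [StarModule ℂ A] [PartialOrder A] [StarOrderedRing A]
    {X : Type*} [MeasurableSpace X]
    (m : Set X → StrongDual ℂ A)
    (hempty : m ∅ = 0)
    (hadd : ∀ S : ℕ → Set X, (∀ n, MeasurableSet (S n)) → Pairwise (Disjoint on S) →
      HasSum (fun n => m (S n)) (m (⋃ n, S n)))
    (hpos : ∀ S : Set X, MeasurableSet S → ∀ a : A, 0 ≤ a →
      ∃ r : ℝ, 0 ≤ r ∧ m S a = (r : ℂ))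
    (μa : A → Measure X)
    (hμa : ∀ a : A, 0 ≤ a → ∀ S : Set X, MeasurableSet S →
      μa a S = ENNReal.ofReal (m S a).re)
    (mhat : Measure X)
    (hmhat : ∀ S : Set X, MeasurableSet S → mhat S = ENNReal.ofReal ‖m S‖)
    (f : X → ℝ) (hfmeas : Measurable f) (hf0 : ∀ x, 0 ≤ f x)
    (hint : ∀ a : A, 0 ≤ a → ∫⁻ x, ENNReal.ofReal (f x) ∂(μa a) < ⊤) :
    ∀ S : Set X, MeasurableSet S →
      (∃! I : StrongDual ℂ A,
        ∀ a : A, 0 ≤ a → I a = ((∫ x in S, f x ∂(μa a) : ℝ) : ℂ)) ∧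
      ∀ I : StrongDual ℂ A,
        (∀ a : A, 0 ≤ a → I a = ((∫ x in S, f x ∂(μa a) : ℝ) : ℂ)) →
          (∀ a : A, 0 ≤ a → ∃ r : ℝ, 0 ≤ r ∧ I a = (r : ℂ)) ∧
            ‖I‖ ≤ ∫ x in S, f x ∂mhat :=
  stateValuedMeasure_integral_exists_general m hpos μa hμa mhat hmhat f hfmeas hf0 hint
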